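/- arXiv:2210.03011 — 3 statements merged into one kernel-verified Lean document; each statement's English description precedes it below -/
import Mathlib

section
/- Let (Ω, P) be a probability space, let C⁰ ⊆ C and S be measurable sets with p := P(C) > 0, let α ∈ (0,1] with P(C⁰) ≥ α·p, and set R := P(Sᶜ). Let E be a real Hilbert space, r > 0, δ ∈ [0, r], and let g : Ω → E be Bochner integrable with ‖g(ω)‖ ≤ r for all ω. Let x ∈ E with ‖x‖ = r satisfy ⟪x, g(ω′)⟫ ≥ r² − r·δ for all ω′ ∈ C⁰ ∩ S. Then ⟪x, p⁻¹ · ∫_C g dP⟫ ≥ (α − R/p)·(r² − r·δ) − r²·(1 − α + R/p). -/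
/-! Write `A = C⁰ ∩ S` and `f = ⟪x, g⟫`. On `A` we have `f ≥ r² - rδ`, and everywhere
`f ≥ -r²` by Cauchy–Schwarz, so `∫_C f ≥ (r² - rδ) P(A) - r² (p - P(A))`. This lower bound
is increasing in `P(A)` because `2r² - rδ ≥ 0`, and `P(A) ≥ P(C⁰) - P(Sᶜ) ≥ αp - R`;
dividing by `p` gives the claim. -/

open MeasureTheory
open scoped RealInnerProductSpace

namespace MeasureTheory

variable {Ω : Type*} [MeasurableSpace Ω] {μ : Measure Ω}

lemma measureReal_sub_measureReal_compl_le_inter [IsFiniteMeasure μ] (s t : Set Ω) :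
    μ.real s - μ.real tᶜ ≤ μ.real (s ∩ t) := by
  have hcover : s ⊆ (s ∩ t) ∪ tᶜ := fun ω hω => by
    by_cases ht : ω ∈ t
    · exact Or.inl ⟨hω, ht⟩
    · exact Or.inr ht
  linarith [measureReal_mono (μ := μ) hcover, measureReal_union_le (μ := μ) (s ∩ t) tᶜ]

lemma le_setIntegral_of_le_on_subset {f : Ω → ℝ} {A C : Set Ω} {c M : ℝ}
    (hC : MeasurableSet C) (hA : MeasurableSet A) (hAC : A ⊆ C) (hμC : μ C ≠ ⊤)
    (hf : IntegrableOn f C μ) (hfA : ∀ ω ∈ A, c ≤ f ω) (hfM : ∀ ω ∈ C \ A, -M ≤ f ω) :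
    c * μ.real A - M * (μ.real C - μ.real A) ≤ ∫ ω in C, f ω ∂μ := by
  have hμA : μ A ≠ ⊤ := ne_top_of_le_ne_top hμC (measure_mono hAC)
  have hμCA : μ (C \ A) ≠ ⊤ := ne_top_of_le_ne_top hμC (measure_mono Set.sdiff_subset)
  have hmass : μ.real (C \ A) = μ.real C - μ.real A := measureReal_sdiff hAC hA hμC
  have hsplit : ∫ ω in C, f ω ∂μ = (∫ ω in A, f ω ∂μ) + ∫ ω in C \ A, f ω ∂μ := by
    rw [← setIntegral_union Set.disjoint_sdiff_right (hC.diff hA) (hf.mono_set hAC)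
      (hf.mono_set Set.sdiff_subset), Set.union_sdiff_cancel hAC]
  have hIA := setIntegral_ge_of_const_le_real hA hμA hfA (hf.mono_set hAC)
  have hICA := setIntegral_ge_of_const_le_real (hC.diff hA) hμCA hfM (hf.mono_set Set.sdiff_subset)
  rw [hmass] at hICA
  rw [hsplit]
  linarith

end MeasureTheory

lemma neg_sq_le_inner_of_norm_le {E : Type*} [NormedAddCommGroup E] [InnerProductSpace ℝ E]
    {x y : E} {r : ℝ} (hx : ‖x‖ = r) (hy : ‖y‖ ≤ r) : -r ^ 2 ≤ ⟪x, y⟫ := by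
  have hCS := abs_real_inner_le_norm x y
  have hxy : ‖x‖ * ‖y‖ ≤ r ^ 2 := by
    rw [hx, sq]
    exact mul_le_mul_of_nonneg_left hy (hx ▸ norm_nonneg x)
  linarith [neg_abs_le ⟪x, y⟫]

theorem stmt_4_general {Ω : Type*} [MeasurableSpace Ω] (P : Measure Ω) [IsProbabilityMeasure P]
    (C C0 S : Set Ω)
    (hCmeas : MeasurableSet C) (hC0meas : MeasurableSet C0) (hSmeas : MeasurableSet S)
    (hC0sub : C0 ⊆ C)
    (p : ℝ) (hp : p = (P C).toReal) (hp0 : 0 < p)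
    (α : ℝ)
    (hC0big : (P C0).toReal ≥ α * p)
    (R : ℝ) (hR : R = (P Sᶜ).toReal)
    {E : Type*} [NormedAddCommGroup E] [InnerProductSpace ℝ E] [CompleteSpace E]
    (r δ : ℝ) (hδr : δ ≤ r)
    (g : Ω → E) (hg : Integrable g P) (hgbd : ∀ ω, ‖g ω‖ ≤ r)
    (x : E) (hx : ‖x‖ = r)
    (hxg : ∀ ω' ∈ C0 ∩ S, ⟪x, g ω'⟫ ≥ r^2 - r * δ) :
    ⟪x, p⁻¹ • ∫ ω in C, g ω ∂P⟫ ≥ (α - R / p) * (r^2 - r * δ) - r^2 * (1 - α + R / p) := by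
  have hAC : C0 ∩ S ⊆ C := Set.inter_subset_left.trans hC0sub
  have hmassA : α * p - R ≤ P.real (C0 ∩ S) := by
    linarith [measureReal_sub_measureReal_compl_le_inter (μ := P) C0 S, measureReal_def P C0,
      measureReal_def P Sᶜ]
  have hIC := le_setIntegral_of_le_on_subset hCmeas (hC0meas.inter hSmeas) hAC
    (measure_ne_top P C) (hg.const_inner x).integrableOn hxg
    (fun ω _ => neg_sq_le_inner_of_norm_le hx (hgbd ω))
  rw [← measureReal_def] at hp
  rw [← hp] at hIC
  have hslope : 0 ≤ 2 * r ^ 2 - r * δ := by nlinarith [hx ▸ norm_nonneg x]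
  rw [real_inner_smul_right, ← integral_inner hg.integrableOn]
  calc (α - R / p) * (r ^ 2 - r * δ) - r ^ 2 * (1 - α + R / p)
      = p⁻¹ * ((2 * r ^ 2 - r * δ) * (α * p - R) - r ^ 2 * p) := by
        field_simp
        ring
    _ ≤ p⁻¹ * ∫ ω in C, ⟪x, g ω⟫ ∂P := by
        gcongr
        nlinarith [mul_le_mul_of_nonneg_left hmassA hslope]

theorem stmt_4 {Ω : Type*} [MeasurableSpace Ω] (P : Measure Ω) [IsProbabilityMeasure P]
    (C C0 S : Set Ω)
    (hCmeas : MeasurableSet C) (hC0meas : MeasurableSet C0) (hSmeas : MeasurableSet S)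
    (hC0sub : C0 ⊆ C)
    (p : ℝ) (hp : p = (P C).toReal) (hp0 : 0 < p)
    (α : ℝ) (hα0 : 0 < α) (hα1 : α ≤ 1)
    (hC0big : (P C0).toReal ≥ α * p)
    (R : ℝ) (hR : R = (P Sᶜ).toReal)
    {E : Type*} [NormedAddCommGroup E] [InnerProductSpace ℝ E] [CompleteSpace E]
    (r δ : ℝ) (hr : 0 < r) (hδ0 : 0 ≤ δ) (hδr : δ ≤ r)
    (g : Ω → E) (hg : Integrable g P) (hgbd : ∀ ω, ‖g ω‖ ≤ r)
    (x : E) (hx : ‖x‖ = r)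
    (hxg : ∀ ω' ∈ C0 ∩ S, ⟪x, g ω'⟫ ≥ r^2 - r * δ) :
    ⟪x, p⁻¹ • ∫ ω in C, g ω ∂P⟫ ≥ (α - R / p) * (r^2 - r * δ) - r^2 * (1 - α + R / p) :=
  stmt_4_general P C C0 S hCmeas hC0meas hSmeas hC0sub p hp hp0 α hC0big R hR r δ hδr g hg hgbd x hx
    hxg
end

section
/- Let (Ω, P) be a probability space, let C⁰ ⊆ C and S be measurable sets with p := P(C) > 0, let α ∈ (0,1] with P(C⁰) ≥ α·p, and set R := P(Sᶜ). Let E be a real Hilbert space, r > 0, δ ∈ [0, r], and let g : Ω → E be Bochner integrable with ‖g(ω)‖ ≤ r for all ω. Let x ∈ E with ‖x‖ = r satisfy ⟪x, g(ω′)⟫ ≥ r² − r·δ for all ω′ ∈ C⁰ ∩ S. Then ⟪x, p⁻¹ · ∫_C g dP⟫ ≥ r²·(1 − (2(1 − α) + 2R/p + α·δ/r)). -/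
open MeasureTheory
open scoped RealInnerProductSpace

/-!
By Cauchy–Schwarz the integrand `⟪x, g⟫` is everywhere at least `-r²`, and on `C⁰ ∩ S ⊆ C` it is
at least `r² - rδ`. Since `C⁰ ∩ S` has mass at least `αp - R` inside `C`, splitting the integral
over `C` along `C⁰ ∩ S` gives `∫_C ⟪x, g⟫ ≥ (2r² - rδ)(αp - R) - r²p`, which exceeds `p` times the
claimed bound by `rδR ≥ 0`.
-/

theorem neg_sq_le_real_inner_of_norm_le {E : Type*} [NormedAddCommGroup E] [InnerProductSpace ℝ E]
    {x y : E} {r : ℝ} (hx : ‖x‖ ≤ r) (hy : ‖y‖ ≤ r) : -(r ^ 2) ≤ ⟪x, y⟫ := by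
  have hr : 0 ≤ r := (norm_nonneg x).trans hx
  refine neg_le_of_abs_le ((abs_real_inner_le_norm x y).trans ?_)
  rw [sq]
  exact mul_le_mul hx hy (norm_nonneg y) hr

namespace MeasureTheory

variable {X : Type*} [MeasurableSpace X] {μ : Measure X} {s t : Set X}

theorem measureReal_le_inter_add_compl [IsFiniteMeasure μ] (s t : Set X) :
    μ.real s ≤ μ.real (s ∩ t) + μ.real tᶜ := by
  calc μ.real s ≤ μ.real (s ∩ t ∪ tᶜ) :=
        measureReal_mono fun x hx => (em (x ∈ t)).imp (fun ht => ⟨hx, ht⟩) id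
    _ ≤ μ.real (s ∩ t) + μ.real tᶜ := measureReal_union_le _ _

theorem le_setIntegral_of_le_on_of_le {f : X → ℝ} {a b : ℝ} (ht : MeasurableSet t) (hts : t ⊆ s)
    (hμs : μ s ≠ ⊤) (hf : IntegrableOn f s μ) (ha : ∀ x ∈ t, a ≤ f x) (hb : ∀ x, b ≤ f x) :
    a * μ.real t + b * μ.real (s \ t) ≤ ∫ x in s, f x ∂μ := by
  rw [← integral_inter_add_sdiff ht hf, Set.inter_eq_self_of_subset_right hts]
  refine add_le_add ?_ ?_
  · exact setIntegral_ge_of_const_le_real ht (measure_ne_top_of_subset hts hμs) ha (hf.mono_set hts)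
  · rw [mul_comm, ← smul_eq_mul, ← setIntegral_const]
    exact setIntegral_mono (integrableOn_const (measure_ne_top_of_subset Set.sdiff_subset hμs))
      (hf.mono_set Set.sdiff_subset) hb

end MeasureTheory

theorem stmt_5_general {Ω : Type*} [MeasurableSpace Ω] (P : Measure Ω) [IsProbabilityMeasure P]
    (C C0 S : Set Ω)
    (hC0meas : MeasurableSet C0) (hSmeas : MeasurableSet S)
    (hC0sub : C0 ⊆ C)
    (p : ℝ) (hp : p = (P C).toReal) (hp0 : 0 < p)
    (α : ℝ)
    (hC0big : (P C0).toReal ≥ α * p)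
    (R : ℝ) (hR : R = (P Sᶜ).toReal)
    {E : Type*} [NormedAddCommGroup E] [InnerProductSpace ℝ E] [CompleteSpace E]
    (r δ : ℝ) (hr : 0 < r) (hδ0 : 0 ≤ δ) (hδr : δ ≤ r)
    (g : Ω → E) (hg : Integrable g P) (hgbd : ∀ ω, ‖g ω‖ ≤ r)
    (x : E) (hx : ‖x‖ = r)
    (hxg : ∀ ω' ∈ C0 ∩ S, ⟪x, g ω'⟫ ≥ r^2 - r * δ) :
    ⟪x, p⁻¹ • ∫ ω in C, g ω ∂P⟫ ≥ r^2 * (1 - (2 * (1 - α) + 2 * R / p + α * δ / r)) := by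
  rw [← measureReal_def] at hp hR hC0big
  have hGC : C0 ∩ S ⊆ C := fun ω hω => hC0sub hω.1
  have hG : MeasurableSet (C0 ∩ S) := hC0meas.inter hSmeas
  set a := P.real (C0 ∩ S)
  have hCa : P.real (C \ (C0 ∩ S)) = p - a := by
    rw [hp, ← measureReal_inter_add_sdiff hG (s := C), Set.inter_eq_self_of_subset_right hGC]
    ring
  have ha : α * p - R ≤ a := by linarith [measureReal_le_inter_add_compl (μ := P) C0 S]
  have hI : (r ^ 2 - r * δ) * a + -(r ^ 2) * (p - a) ≤ ∫ ω in C, ⟪x, g ω⟫ ∂P := by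
    rw [← hCa]
    exact le_setIntegral_of_le_on_of_le hG hGC (measure_ne_top P C)
      (hg.const_inner x).integrableOn hxg
      fun ω => neg_sq_le_real_inner_of_norm_le hx.le (hgbd ω)
  have hR0 : 0 ≤ R := hR ▸ measureReal_nonneg
  rw [inner_smul_right, ← integral_inner hg.integrableOn, ge_iff_le, inv_mul_eq_div,
    le_div_iff₀ hp0]
  calc r ^ 2 * (1 - (2 * (1 - α) + 2 * R / p + α * δ / r)) * p
      = (2 * r ^ 2 - r * δ) * (α * p - R) - r ^ 2 * p - r * δ * R := by
        field_simp
        ring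
    _ ≤ (2 * r ^ 2 - r * δ) * a - r ^ 2 * p := by
        have hcoef : 0 ≤ 2 * r ^ 2 - r * δ := by nlinarith
        linarith [mul_le_mul_of_nonneg_left ha hcoef, mul_nonneg (mul_nonneg hr.le hδ0) hR0]
    _ ≤ ∫ ω in C, ⟪x, g ω⟫ ∂P := by linarith

theorem stmt_5 {Ω : Type*} [MeasurableSpace Ω] (P : Measure Ω) [IsProbabilityMeasure P]
    (C C0 S : Set Ω)
    (hCmeas : MeasurableSet C) (hC0meas : MeasurableSet C0) (hSmeas : MeasurableSet S)
    (hC0sub : C0 ⊆ C)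
    (p : ℝ) (hp : p = (P C).toReal) (hp0 : 0 < p)
    (α : ℝ) (hα0 : 0 < α) (hα1 : α ≤ 1)
    (hC0big : (P C0).toReal ≥ α * p)
    (R : ℝ) (hR : R = (P Sᶜ).toReal)
    {E : Type*} [NormedAddCommGroup E] [InnerProductSpace ℝ E] [CompleteSpace E]
    (r δ : ℝ) (hr : 0 < r) (hδ0 : 0 ≤ δ) (hδr : δ ≤ r)
    (g : Ω → E) (hg : Integrable g P) (hgbd : ∀ ω, ‖g ω‖ ≤ r)
    (x : E) (hx : ‖x‖ = r)
    (hxg : ∀ ω' ∈ C0 ∩ S, ⟪x, g ω'⟫ ≥ r^2 - r * δ) :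
    ⟪x, p⁻¹ • ∫ ω in C, g ω ∂P⟫ ≥ r^2 * (1 - (2 * (1 - α) + 2 * R / p + α * δ / r)) :=
  stmt_5_general P C C0 S hC0meas hSmeas hC0sub p hp hp0 α hC0big R hR r δ hr hδ0 hδr g hg hgbd x hx
    hxg
end

section
/- Let E be a real inner product space, let r > 0, ρ ≥ 0 and Δ ∈ ℝ, and let x, μ, ν ∈ E satisfy ‖x‖ = r, ‖μ‖ ≤ r, ‖ν‖ ≤ r and ‖ν‖² ≥ (1 − Δ)·r². If ⟪x, μ⟫ ≥ r²·(1 − ρ) and ⟪μ, ν⟫ < r²·(1 − ρ − √(2ρ) − Δ/2), then ‖x − μ‖ < ‖x − ν‖. -/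
/-!
Alignment gives `‖x - μ‖² ≤ 2ρr²`, i.e. `‖x - μ‖ ≤ √(2ρ) r`. By Cauchy–Schwarz, `⟪x, ν⟫` then
exceeds `⟪μ, ν⟫` by at most `√(2ρ) r²`, and the separation hypothesis turns this into
`‖x - ν‖² > 2ρr² ≥ ‖x - μ‖²`.
-/

open scoped RealInnerProductSpace

section

variable {E : Type*} [NormedAddCommGroup E] [InnerProductSpace ℝ E]

lemma norm_sub_sq_le_of_inner_ge {x μ : E} {r ρ : ℝ} (hx : ‖x‖ ≤ r) (hμ : ‖μ‖ ≤ r)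
    (hxμ : r ^ 2 * (1 - ρ) ≤ ⟪x, μ⟫) : ‖x - μ‖ ^ 2 ≤ 2 * ρ * r ^ 2 := by
  have hx2 : ‖x‖ ^ 2 ≤ r ^ 2 := pow_le_pow_left₀ (norm_nonneg x) hx 2
  have hμ2 : ‖μ‖ ^ 2 ≤ r ^ 2 := pow_le_pow_left₀ (norm_nonneg μ) hμ 2
  rw [norm_sub_sq_real]
  linarith

lemma norm_sub_le_sqrt_mul_of_inner_ge {x μ : E} {r ρ : ℝ} (hx : ‖x‖ ≤ r) (hμ : ‖μ‖ ≤ r)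
    (hxμ : r ^ 2 * (1 - ρ) ≤ ⟪x, μ⟫) : ‖x - μ‖ ≤ √(2 * ρ) * r :=
  calc ‖x - μ‖ = √(‖x - μ‖ ^ 2) := (Real.sqrt_sq (norm_nonneg _)).symm
    _ ≤ √(2 * ρ * r ^ 2) := Real.sqrt_le_sqrt (norm_sub_sq_le_of_inner_ge hx hμ hxμ)
    _ = √(2 * ρ) * r := by
      rw [Real.sqrt_mul' _ (sq_nonneg r), Real.sqrt_sq ((norm_nonneg x).trans hx)]

lemma inner_le_inner_add_norm_sub_mul_norm (x μ ν : E) :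
    ⟪x, ν⟫ ≤ ⟪μ, ν⟫ + ‖x - μ‖ * ‖ν‖ := by
  have h := real_inner_le_norm (x - μ) ν
  rw [inner_sub_left] at h
  linarith

end

theorem stmt_6_general {E : Type*} [NormedAddCommGroup E] [InnerProductSpace ℝ E]
    (r ρ Δ : ℝ) (x μ ν : E)
    (hx : ‖x‖ = r) (hμ : ‖μ‖ ≤ r) (hν : ‖ν‖ ≤ r) (hνΔ : ‖ν‖^2 ≥ (1 - Δ) * r^2)
    (hxμ : ⟪x, μ⟫ ≥ r^2 * (1 - ρ))
    (hμν : ⟪μ, ν⟫ < r^2 * (1 - ρ - Real.sqrt (2 * ρ) - Δ / 2)) :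
    ‖x - μ‖ < ‖x - ν‖ := by
  have hr : 0 ≤ r := hx ▸ norm_nonneg x
  have hxμ_sq := norm_sub_sq_le_of_inner_ge hx.le hμ hxμ
  have hxν : ⟪x, ν⟫ ≤ ⟪μ, ν⟫ + √(2 * ρ) * r * r :=
    (inner_le_inner_add_norm_sub_mul_norm x μ ν).trans <| add_le_add_right
      (mul_le_mul (norm_sub_le_sqrt_mul_of_inner_ge hx.le hμ hxμ) hν (norm_nonneg ν)
        (by positivity)) _
  have hsq : ‖x - μ‖ ^ 2 < ‖x - ν‖ ^ 2 := by
    rw [norm_sub_sq_real x ν, hx]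
    linarith
  exact lt_of_pow_lt_pow_left₀ 2 (norm_nonneg _) hsq

theorem stmt_6 {E : Type*} [NormedAddCommGroup E] [InnerProductSpace ℝ E]
    (r ρ Δ : ℝ) (hr : 0 < r) (hρ : 0 ≤ ρ) (x μ ν : E)
    (hx : ‖x‖ = r) (hμ : ‖μ‖ ≤ r) (hν : ‖ν‖ ≤ r) (hνΔ : ‖ν‖^2 ≥ (1 - Δ) * r^2)
    (hxμ : ⟪x, μ⟫ ≥ r^2 * (1 - ρ))
    (hμν : ⟪μ, ν⟫ < r^2 * (1 - ρ - Real.sqrt (2 * ρ) - Δ / 2)) :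
    ‖x - μ‖ < ‖x - ν‖ :=
  stmt_6_general r ρ Δ x μ ν hx hμ hν hνΔ hxμ hμν
end
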